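/- arXiv:1912.04169 — 8 statements merged into one kernel-verified Lean document; each statement's English description precedes it below -/
import Mathlib

section
/- For every pair of real numbers x, y satisfying 0 < x, 0 < y and x + y < 1, there exists a natural number C > 1 such that {Cx} + {Cy} > 1. -/
private lemma fract_eq_of_sub (t : ℝ) (K : ℤ) (h0 : 0 ≤ t - K) (h1 : t - K < 1) :
    Int.fract t = t - K := by
  rw [← Int.fract_sub_intCast t K]
  exact Int.fract_eq_self.mpr ⟨h0, h1⟩

theorem fract_sum_gt_one (x y : ℝ) (hx : 0 < x) (hy : 0 < y) (hxy : x + y < 1) :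
    ∃ C : ℕ, 1 < C ∧ Int.fract (C * x) + Int.fract (C * y) > 1 := by
  -- choose a small error budget E
  obtain ⟨E, hE0, hEx, hEy, hEs⟩ : ∃ E : ℝ, 0 < E ∧ E < x ∧ E < y ∧ 2 * E < 1 - (x + y) := by
    set m := min x (min y ((1 - (x + y)) / 2)) with hm
    have h1 : m ≤ x := min_le_left _ _
    have h2 : m ≤ y := le_trans (min_le_right _ _) (min_le_left _ _)
    have h3 : m ≤ (1 - (x + y)) / 2 := le_trans (min_le_right _ _) (min_le_right _ _)
    have hm0 : 0 < m := lt_min hx (lt_min hy (by linarith))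
    exact ⟨m / 2, by linarith, by linarith, by linarith, by linarith⟩
  obtain ⟨Q, hQ⟩ := exists_nat_gt (3 / E)
  have hQ0 : (0 : ℝ) < Q := lt_trans (by positivity) hQ
  have hQpos : 0 < Q := by exact_mod_cast hQ0
  obtain ⟨N, hN⟩ := exists_nat_gt (3 * Q / E)
  have hN0 : (0 : ℝ) < N := lt_trans (by positivity) hN
  have hNpos : 0 < N := by exact_mod_cast hN0
  obtain ⟨j1, k1, hk10, hk1N, h1⟩ := Real.exists_int_int_abs_mul_sub_le x hNpos
  obtain ⟨j2, k2, hk20, hk2Q, h2⟩ := Real.exists_int_int_abs_mul_sub_le ((k1 : ℝ) * y) hQpos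
  set a := k1.toNat with hadef
  set b := k2.toNat with hbdef
  have ha : ((a : ℤ) : ℝ) = (k1 : ℝ) := by
    rw [hadef, Int.toNat_of_nonneg hk10.le]
  have hb : ((b : ℤ) : ℝ) = (k2 : ℝ) := by
    rw [hbdef, Int.toNat_of_nonneg hk20.le]
  have ha1 : 1 ≤ a := by omega
  have hb1 : 1 ≤ b := by omega
  have hbQ : (b : ℝ) ≤ Q := by
    have hq : b ≤ Q := by omega
    exact_mod_cast hq
  have h3 : 3 ≤ 3 * a * b := by nlinarith
  refine ⟨3 * a * b - 1, by omega, ?_⟩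
  have h3ab : 1 ≤ 3 * a * b := by omega
  have hCr : ((3 * a * b - 1 : ℕ) : ℝ) = 3 * a * b - 1 := by
    push_cast [Nat.cast_sub h3ab]
    ring
  -- error bounds
  have hNe : 1 / ((N : ℝ) + 1) ≤ E / (3 * Q) := by
    rw [div_le_div_iff₀ (by positivity) (by positivity)]
    have : 3 * (Q : ℝ) / E < N := hN
    rw [div_lt_iff₀ hE0] at this
    nlinarith
  have hQe : 1 / ((Q : ℝ) + 1) ≤ E / 3 := by
    rw [div_le_div_iff₀ (by positivity) (by positivity)]
    have : 3 / E < Q := hQ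
    rw [div_lt_iff₀ hE0] at this
    nlinarith
  set θ1 : ℝ := 3 * (b : ℝ) * ((a : ℝ) * x - j1) with hθ1
  set θ2 : ℝ := 3 * ((b : ℝ) * ((a : ℝ) * y) - j2) with hθ2
  have habs1 : |θ1| ≤ E := by
    rw [hθ1, abs_mul, abs_of_nonneg (by positivity : (0:ℝ) ≤ 3 * (b : ℝ))]
    have h1' : |(a : ℝ) * x - j1| ≤ 1 / ((N : ℝ) + 1) := by
      rw [show ((a : ℝ)) = (k1 : ℝ) by exact_mod_cast ha]
      exact h1
    have hb0 : (0:ℝ) < b := by exact_mod_cast hb1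
    have := abs_nonneg ((a : ℝ) * x - j1)
    calc 3 * (b : ℝ) * |(a : ℝ) * x - j1| ≤ 3 * (Q : ℝ) * (1 / ((N : ℝ) + 1)) := by
          apply mul_le_mul (by linarith) h1' this (by positivity)
      _ ≤ 3 * (Q : ℝ) * (E / (3 * Q)) := by
          apply mul_le_mul_of_nonneg_left hNe (by positivity)
      _ = E := by field_simp
  have habs2 : |θ2| ≤ E := by
    rw [hθ2, abs_mul, abs_of_nonneg (by norm_num : (0:ℝ) ≤ 3)]
    have h2' : |(b : ℝ) * ((a : ℝ) * y) - j2| ≤ 1 / ((Q : ℝ) + 1) := by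
      rw [show ((a : ℝ)) = (k1 : ℝ) by exact_mod_cast ha,
          show ((b : ℝ)) = (k2 : ℝ) by exact_mod_cast hb]
      exact h2
    calc 3 * |(b : ℝ) * ((a : ℝ) * y) - j2| ≤ 3 * (1 / ((Q : ℝ) + 1)) := by linarith
      _ ≤ 3 * (E / 3) := by linarith
      _ = E := by ring
  have habs1' : -E ≤ θ1 ∧ θ1 ≤ E := abs_le.mp habs1
  have habs2' : -E ≤ θ2 ∧ θ2 ≤ E := abs_le.mp habs2
  have hf1 : Int.fract (((3 * a * b - 1 : ℕ) : ℝ) * x) = 1 - x + θ1 := by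
    have hK : (((3 * (b : ℤ) * j1 - 1 : ℤ)) : ℝ) = 3 * (b : ℝ) * j1 - 1 := by push_cast; ring
    have ht : ((3 * a * b - 1 : ℕ) : ℝ) * x - ((3 * (b : ℤ) * j1 - 1 : ℤ) : ℝ) = 1 - x + θ1 := by
      rw [hCr, hK, hθ1]; ring
    rw [fract_eq_of_sub _ _ (by rw [ht]; linarith [habs1'.1, hEs, hy]) (by rw [ht]; linarith [habs1'.2, hEx]), ht]
  have hf2 : Int.fract (((3 * a * b - 1 : ℕ) : ℝ) * y) = 1 - y + θ2 := by
    have hK : (((3 * j2 - 1 : ℤ)) : ℝ) = 3 * (j2 : ℝ) - 1 := by push_cast; ring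
    have ht : ((3 * a * b - 1 : ℕ) : ℝ) * y - ((3 * j2 - 1 : ℤ) : ℝ) = 1 - y + θ2 := by
      rw [hCr, hK, hθ2]; ring
    rw [fract_eq_of_sub _ _ (by rw [ht]; linarith [habs2'.1, hEs, hx]) (by rw [ht]; linarith [habs2'.2, hEy]), ht]
  rw [hf1, hf2]
  linarith [habs1'.1, habs2'.1]
end

section
/- Let x, y be real numbers such that 1, x, y are linearly independent over ℚ (i.e., the only integers a, b, c with a·x + b·y + c = 0 are a = b = c = 0). Then the set of natural numbers C with {Cx} + {Cy} > 1 is infinite. -/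
/-!
Since `x`, `y` and `x + y` are irrational, `{Cx} + {Cy} = 1` never happens for `C > 0`, so if the
claim failed we would have `{Cx} + {Cy} < 1` for all large `C`. By density of irrational
rotations pick a large `C'` with `{C'y} > 1/2`, and then a large `C` with
`{C'y} < {Cx} < 1 - {C'x}`. Then no carries occur when adding `C` and `C'`, so
`{(C + C')x} + {(C + C')y} = ({Cx} + {C'y}) + {Cy} + {C'x} > 1`, a contradiction.
-/

open Set Filter Topology

lemma Int.fract_add_of_fract_add_fract_lt_one {u v : ℝ} (h : Int.fract u + Int.fract v < 1) :
    Int.fract (u + v) = Int.fract u + Int.fract v := by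
  rw [Int.fract_eq_iff]
  refine ⟨by positivity, h, ⌊u⌋ + ⌊v⌋, ?_⟩
  push_cast
  linarith [Int.floor_add_fract u, Int.floor_add_fract v]

lemma Irrational.fract_add_fract_ne_one {u v : ℝ} (h : Irrational (u + v)) :
    Int.fract u + Int.fract v ≠ 1 := by
  intro hsum
  apply h.ne_int (⌊u⌋ + ⌊v⌋ + 1)
  push_cast
  linarith [Int.floor_add_fract u, Int.floor_add_fract v]

lemma irrational_intCast_mul_add_intCast_mul {x y : ℝ}
    (hindep : ∀ a b c : ℤ, (a : ℝ) * x + (b : ℝ) * y + (c : ℝ) = 0 → a = 0 ∧ b = 0 ∧ c = 0)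
    {a b : ℤ} (hab : a ≠ 0 ∨ b ≠ 0) : Irrational (a * x + b * y) := by
  rintro ⟨q, hq⟩
  have hnum : (q.num : ℝ) = q.den * (a * x + b * y) := by
    rw [← hq, Rat.cast_def]
    field_simp
  obtain ⟨ha, hb, -⟩ := hindep (q.den * a) (q.den * b) (-q.num) <| by
    push_cast
    linear_combination -hnum
  simp only [mul_eq_zero, Int.natCast_eq_zero, q.den_nz, false_or] at ha hb
  tauto

lemma Irrational.frequently_fract_nat_mul_mem_Ioo {θ : ℝ} (hθ : Irrational θ) {a b : ℝ}
    (ha : 0 ≤ a) (hab : a < b) (hb : b ≤ 1) :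
    ∃ᶠ n : ℕ in atTop, Int.fract (n * θ) ∈ Ioo a b := by
  have hdense : DenseRange (· • (θ : AddCircle (1 : ℝ)) : ℤ → AddCircle (1 : ℝ)) :=
    AddCircle.denseRange_zsmul_coe_iff.2 (by simpa using hθ)
  have hclust : MapClusterPt (((a + b) / 2 : ℝ) : AddCircle (1 : ℝ)) atTop
      (· • (θ : AddCircle (1 : ℝ)) : ℕ → AddCircle (1 : ℝ)) := by
    rw [mapClusterPt_atTop_nsmul_iff_mem_topologicalClosure_zmultiples, ← SetLike.mem_coe,
      AddSubgroup.topologicalClosure_coe, AddSubgroup.coe_zmultiples, hdense.closure_range]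
    trivial
  have hU : ((↑) '' Ioo a b : Set (AddCircle (1 : ℝ))) ∈
      𝓝 (((a + b) / 2 : ℝ) : AddCircle (1 : ℝ)) :=
    QuotientAddGroup.isOpenMap_coe.image_mem_nhds (Ioo_mem_nhds (by linarith) (by linarith))
  refine (hclust.frequently hU).mono ?_
  rintro n ⟨t, ht, hnt⟩
  rw [← AddCircle.coe_nsmul, nsmul_eq_mul, ← AddCircle.coe_fract (n * θ),
    AddCircle.coe_eq_coe_iff_of_mem_Ico (a := 0) (by constructor <;> linarith [ht.1, ht.2])
      (by simp [Int.fract_nonneg, Int.fract_lt_one])] at hnt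
  rwa [← hnt]

theorem infinite_fract_sum_gt_one (x y : ℝ)
    (hindep : ∀ a b c : ℤ, (a : ℝ) * x + (b : ℝ) * y + (c : ℝ) = 0 → a = 0 ∧ b = 0 ∧ c = 0) :
    {C : ℕ | Int.fract (C * x) + Int.fract (C * y) > 1}.Infinite := by
  have hx : Irrational x := by
    simpa using irrational_intCast_mul_add_intCast_mul hindep (a := 1) (b := 0) (by simp)
  have hy : Irrational y := by
    simpa using irrational_intCast_mul_add_intCast_mul hindep (a := 0) (b := 1) (by simp)
  have hxy : Irrational (x + y) := by
    simpa using irrational_intCast_mul_add_intCast_mul hindep (a := 1) (b := 1) (by simp)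
  rw [← Nat.frequently_atTop_iff_infinite]
  by_contra hfin
  rw [not_frequently] at hfin
  have hsmall : ∀ᶠ C : ℕ in atTop, Int.fract (C * x) + Int.fract (C * y) < 1 := by
    filter_upwards [hfin, eventually_gt_atTop 0] with C hC hC0
    refine (not_lt.1 hC).lt_of_ne (Irrational.fract_add_fract_ne_one ?_)
    simpa [mul_add] using hxy.natCast_mul hC0.ne'
  obtain ⟨C', hC'y, hC'⟩ := ((hy.frequently_fract_nat_mul_mem_Ioo (a := 1 / 2) (b := 1)
    (by norm_num) (by norm_num) le_rfl).and_eventually hsmall).exists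
  have hshift : ∀ᶠ C : ℕ in atTop,
      Int.fract ((C + C' : ℕ) * x) + Int.fract ((C + C' : ℕ) * y) < 1 :=
    (tendsto_add_atTop_nat C').eventually hsmall
  obtain ⟨C, hCx, hC, hCC'⟩ := ((hx.frequently_fract_nat_mul_mem_Ioo
    (a := Int.fract (C' * y)) (b := 1 - Int.fract (C' * x)) (by linarith [hC'y.1])
    (by linarith) (by linarith [Int.fract_nonneg (C' * x)])).and_eventually
    (hsmall.and hshift)).exists
  push_cast at hCC'
  rw [add_mul, add_mul, Int.fract_add_of_fract_add_fract_lt_one (by linarith [hCx.2]),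
    Int.fract_add_of_fract_add_fract_lt_one (by linarith [hCx.1])] at hCC'
  linarith [hCx.1, hC'y.1, Int.fract_nonneg (C * y), Int.fract_nonneg (C' * x)]
end

section
/- Let x, y be real numbers with 0 < x < 1 and 0 < y < 1. If x + y < 1, then κ(x) + κ(y) + κ(−x−y) = 6xy(1−x−y), which is strictly positive; if x + y > 1, then κ(x) + κ(y) + κ(−x−y) = −6(1−x)(1−y)(x+y−1), which is strictly negative. -/
noncomputable def κ (x : ℝ) : ℝ :=
  Int.fract x * (1 - Int.fract x) * (1 - 2 * Int.fract x)

theorem kappa_sum_sign (x y : ℝ) (hx0 : 0 < x) (hx1 : x < 1) (hy0 : 0 < y) (hy1 : y < 1) :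
    (x + y < 1 →
      κ x + κ y + κ (-x - y) = 6 * x * y * (1 - x - y) ∧
      0 < κ x + κ y + κ (-x - y)) ∧
    (x + y > 1 →
      κ x + κ y + κ (-x - y) = -6 * (1 - x) * (1 - y) * (x + y - 1) ∧
      κ x + κ y + κ (-x - y) < 0) := by
  have hfx : Int.fract x = x := Int.fract_eq_self.2 ⟨hx0.le, hx1⟩
  have hfy : Int.fract y = y := Int.fract_eq_self.2 ⟨hy0.le, hy1⟩
  constructor
  · intro h
    have hfz : Int.fract (-x - y) = 1 - x - y := by
      rw [Int.fract_eq_iff]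
      refine ⟨by linarith, by linarith, ⟨-1, by push_cast; ring⟩⟩
    have heq : κ x + κ y + κ (-x - y) = 6 * x * y * (1 - x - y) := by
      simp only [κ, hfx, hfy, hfz]; ring
    exact ⟨heq, by rw [heq]; nlinarith [mul_pos (mul_pos hx0 hy0) (show (0:ℝ) < 1 - x - y by linarith)]⟩
  · intro h
    have hfz : Int.fract (-x - y) = 2 - x - y := by
      rw [Int.fract_eq_iff]
      refine ⟨by linarith, by linarith, ⟨-2, by push_cast; ring⟩⟩
    have heq : κ x + κ y + κ (-x - y) = -6 * (1 - x) * (1 - y) * (x + y - 1) := by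
      simp only [κ, hfx, hfy, hfz]; ring
    refine ⟨heq, ?_⟩
    rw [heq]
    have h1 : 0 < 1 - x := by linarith
    have h2 : 0 < 1 - y := by linarith
    have h3 : 0 < x + y - 1 := by linarith
    nlinarith [mul_pos (mul_pos h1 h2) h3]
end

section
/- For all real numbers Δ₁, Δ₂ with 0 < Δ₁, 0 < Δ₂ and Δ₁ + Δ₂ < 1 (i.e., for every point strictly inside the wing 0 < Δ₁, Δ₂, 1−Δ₁−Δ₂ < 1), there exists a natural number C > 1 such that κ(CΔ₁) + κ(CΔ₂) + κ(−CΔ₁ − CΔ₂) < 0. -/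
lemma simul_approx (α β : ℝ) {ε : ℝ} (hε : 0 < ε) :
    ∃ m : ℕ, 0 < m ∧ ∃ p q : ℤ, |(m : ℝ) * α - p| < ε ∧ |(m : ℝ) * β - q| < ε := by
  obtain ⟨K, hK0, hKε⟩ : ∃ K : ℕ, 0 < K ∧ 1 / (K : ℝ) < ε := by
    refine ⟨⌊1/ε⌋₊ + 1, Nat.succ_pos _, ?_⟩
    have h1 : (1:ℝ)/ε < (⌊1/ε⌋₊ + 1 : ℕ) := by
      push_cast
      exact Nat.lt_floor_add_one (1/ε)
    have hKpos : (0:ℝ) < ((⌊1/ε⌋₊ + 1 : ℕ) : ℝ) := by positivity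
    rw [div_lt_iff₀ hKpos]
    rw [div_lt_iff₀ hε] at h1
    linarith
  have hKR : (0:ℝ) < (K:ℝ) := by exact_mod_cast hK0
  have hbound : ∀ (x : ℝ), ⌊Int.fract x * K⌋₊ < K := by
    intro x
    have h1 : Int.fract x * K < K := by
      have := Int.fract_lt_one x
      nlinarith
    exact Nat.floor_lt (mul_nonneg (Int.fract_nonneg x) hKR.le) |>.mpr h1
  let f : ℕ → Fin K × Fin K := fun n =>
    (⟨⌊Int.fract ((n:ℝ)*α) * K⌋₊, hbound _⟩, ⟨⌊Int.fract ((n:ℝ)*β) * K⌋₊, hbound _⟩)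
  obtain ⟨i, j, hij, hfij⟩ := Finite.exists_ne_map_eq_of_infinite f
  have close : ∀ (x y : ℝ), ⌊Int.fract x * K⌋₊ = ⌊Int.fract y * K⌋₊ →
      |Int.fract x - Int.fract y| < 1 / K := by
    intro x y h
    have h1 : Int.fract x * K < ⌊Int.fract x * K⌋₊ + 1 := Nat.lt_floor_add_one _
    have h2 : (⌊Int.fract x * K⌋₊ : ℝ) ≤ Int.fract x * K :=
      Nat.floor_le (mul_nonneg (Int.fract_nonneg x) hKR.le)
    have h3 : Int.fract y * K < ⌊Int.fract y * K⌋₊ + 1 := Nat.lt_floor_add_one _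
    have h4 : (⌊Int.fract y * K⌋₊ : ℝ) ≤ Int.fract y * K :=
      Nat.floor_le (mul_nonneg (Int.fract_nonneg y) hKR.le)
    rw [h] at h1 h2
    rw [abs_sub_lt_iff]
    constructor <;> · rw [lt_div_iff₀ hKR]; nlinarith
  have key : ∀ a b : ℕ, a < b → f a = f b →
      ∃ m : ℕ, 0 < m ∧ ∃ p q : ℤ, |(m : ℝ) * α - p| < ε ∧ |(m : ℝ) * β - q| < ε := by
    intro a b hab hfab
    simp only [f, Prod.mk.injEq, Fin.mk.injEq] at hfab
    obtain ⟨e1, e2⟩ := hfab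
    have hα := close _ _ e1
    have hβ := close _ _ e2
    refine ⟨b - a, Nat.sub_pos_of_lt hab, ⌊(b:ℝ)*α⌋ - ⌊(a:ℝ)*α⌋, ⌊(b:ℝ)*β⌋ - ⌊(a:ℝ)*β⌋, ?_, ?_⟩
    · have heq : ((b - a : ℕ) : ℝ) * α - ((⌊(b:ℝ)*α⌋ - ⌊(a:ℝ)*α⌋ : ℤ) : ℝ) =
          -(Int.fract ((a:ℝ)*α) - Int.fract ((b:ℝ)*α)) := by
        rw [Nat.cast_sub hab.le]
        simp only [Int.fract]
        push_cast
        ring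
      rw [heq, abs_neg]
      linarith [hα]
    · have heq : ((b - a : ℕ) : ℝ) * β - ((⌊(b:ℝ)*β⌋ - ⌊(a:ℝ)*β⌋ : ℤ) : ℝ) =
          -(Int.fract ((a:ℝ)*β) - Int.fract ((b:ℝ)*β)) := by
        rw [Nat.cast_sub hab.le]
        simp only [Int.fract]
        push_cast
        ring
      rw [heq, abs_neg]
      linarith [hβ]
  rcases hij.lt_or_gt with hlt | hlt
  · exact key i j hlt hfij
  · exact key j i hlt hfij.symm

lemma kappa_cubic_neg {a b : ℝ} (ha0 : 0 < a) (ha1 : a < 1) (hb0 : 0 < b) (hb1 : b < 1)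
    (hab : 1 < a + b) :
    a*(1-a)*(1-2*a) + b*(1-b)*(1-2*b) +
      (2-a-b)*(1-(2-a-b))*(1-2*(2-a-b)) < 0 := by
  nlinarith [mul_pos (mul_pos (sub_pos.mpr ha1) (sub_pos.mpr hb1))
    (sub_pos.mpr hab)]

theorem exists_kappa_sum_neg (Δ₁ Δ₂ : ℝ) (h1 : 0 < Δ₁) (h2 : 0 < Δ₂) (h12 : Δ₁ + Δ₂ < 1) :
    ∃ C : ℕ, 1 < C ∧ κ (C * Δ₁) + κ (C * Δ₂) + κ (-(C * Δ₁) - C * Δ₂) < 0 := by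
  set δ : ℝ := Δ₁ + Δ₂ with hδdef
  have hδ0 : 0 < δ := by positivity
  have hδ1 : δ < 1 := h12
  set ε : ℝ := min (min (Δ₁/4) (Δ₂/4)) (min ((1-δ)/7) (δ/7)) with hεdef
  have hε1 : ε ≤ Δ₁/4 := (min_le_left _ _).trans (min_le_left _ _)
  have hε2 : ε ≤ Δ₂/4 := (min_le_left _ _).trans (min_le_right _ _)
  have hε3 : ε ≤ (1-δ)/7 := (min_le_right _ _).trans (min_le_left _ _)
  have hε4 : ε ≤ δ/7 := (min_le_right _ _).trans (min_le_right _ _)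
  have hεpos : 0 < ε := by
    apply lt_min (lt_min (by linarith) (by linarith)) (lt_min (by linarith) (by linarith))
  obtain ⟨m, hm, p, q, hp, hq⟩ := simul_approx Δ₁ Δ₂ hεpos
  rw [abs_lt] at hp hq
  obtain ⟨hp1, hp2⟩ := hp
  obtain ⟨hq1, hq2⟩ := hq
  set θa : ℝ := (m:ℝ)*Δ₁ - p with hθa
  set θb : ℝ := (m:ℝ)*Δ₂ - q with hθb
  refine ⟨3*m - 1, by omega, ?_⟩
  have hC : ((3*m - 1 : ℕ) : ℝ) = 3*(m:ℝ) - 1 := by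
    push_cast [Nat.cast_sub (by omega : 1 ≤ 3*m)]
    ring
  have hfa : Int.fract (((3*m - 1 : ℕ) : ℝ) * Δ₁) = 1 - Δ₁ + 3*θa := by
    have he : ((3*m - 1 : ℕ) : ℝ) * Δ₁ = (1 - Δ₁ + 3*θa) + ((3*p - 1 : ℤ) : ℝ) := by
      rw [hC]
      push_cast
      rw [hθa]
      ring
    rw [he, Int.fract_add_intCast, Int.fract_eq_self.mpr ⟨by linarith, by linarith⟩]
  have hfb : Int.fract (((3*m - 1 : ℕ) : ℝ) * Δ₂) = 1 - Δ₂ + 3*θb := by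
    have he : ((3*m - 1 : ℕ) : ℝ) * Δ₂ = (1 - Δ₂ + 3*θb) + ((3*q - 1 : ℤ) : ℝ) := by
      rw [hC]
      push_cast
      rw [hθb]
      ring
    rw [he, Int.fract_add_intCast, Int.fract_eq_self.mpr ⟨by linarith, by linarith⟩]
  have hfc : Int.fract (-(((3*m - 1 : ℕ) : ℝ) * Δ₁) - ((3*m - 1 : ℕ) : ℝ) * Δ₂)
      = 2 - (1 - Δ₁ + 3*θa) - (1 - Δ₂ + 3*θb) := by
    have he : -(((3*m - 1 : ℕ) : ℝ) * Δ₁) - ((3*m - 1 : ℕ) : ℝ) * Δ₂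
        = (2 - (1 - Δ₁ + 3*θa) - (1 - Δ₂ + 3*θb)) + ((-3*p - 3*q : ℤ) : ℝ) := by
      rw [hC]
      push_cast
      rw [hθa, hθb]
      ring
    rw [he, Int.fract_add_intCast, Int.fract_eq_self.mpr ⟨by linarith, by linarith⟩]
  show κ (((3*m - 1 : ℕ) : ℝ) * Δ₁) + κ (((3*m - 1 : ℕ) : ℝ) * Δ₂)
      + κ (-(((3*m - 1 : ℕ) : ℝ) * Δ₁) - ((3*m - 1 : ℕ) : ℝ) * Δ₂) < 0
  rw [κ, κ, κ, hfa, hfb, hfc]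
  exact kappa_cubic_neg (by linarith) (by linarith) (by linarith) (by linarith) (by linarith)
end

section
/- For every integer n ≥ 1 and every real number Δ, one has ∑_{J=1}^{n−1} J·[κ(Δ + J/n) + κ(Δ − J/n)] = κ(nΔ)/n − n·κ(Δ). -/
open Finset

lemma L1 (n : ℕ) (s : ℝ) : ∑ j ∈ range n, ((j:ℝ) + s) = n*s + n*(n-1)/2 := by
  induction n with
  | zero => simp
  | succ k ih => rw [sum_range_succ, ih]; push_cast; ring

lemma L2 (n : ℕ) (s : ℝ) : ∑ j ∈ range n, ((j:ℝ) + s)^2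
    = n*s^2 + n*(n-1)*s + n*(n-1)*(2*n-1)/6 := by
  induction n with
  | zero => simp
  | succ k ih => rw [sum_range_succ, ih]; push_cast; ring

lemma L3 (n : ℕ) (s : ℝ) : ∑ j ∈ range n, ((j:ℝ) + s)^3
    = n*s^3 + 3*(n*(n-1)/2)*s^2 + 3*(n*(n-1)*(2*n-1)/6)*s + (n*(n-1)/2)^2 := by
  induction n with
  | zero => simp
  | succ k ih => rw [sum_range_succ, ih]; push_cast; ring

lemma key_sum (n : ℕ) (hn : 0 < n) (s : ℝ) :
    ∑ j ∈ range n, (((j:ℝ)+s)/n * (1 - ((j:ℝ)+s)/n) * (1 - 2*(((j:ℝ)+s)/n)))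
      = s*(1-s)*(1-2*s)/(n:ℝ)^2 := by
  have hn0 : (n:ℝ) ≠ 0 := Nat.cast_ne_zero.2 hn.ne'
  have h : ∀ j ∈ range n, ((j:ℝ)+s)/n * (1 - ((j:ℝ)+s)/n) * (1 - 2*(((j:ℝ)+s)/n))
      = (2*((j:ℝ)+s)^3 - 3*(n:ℝ)*((j:ℝ)+s)^2 + (n:ℝ)^2*((j:ℝ)+s))/(n:ℝ)^3 := by
    intro j _
    field_simp
    ring
  rw [sum_congr rfl h]
  rw [show ∀ F G H : ℕ → ℝ, (∑ j ∈ range n, (2*F j - 3*(n:ℝ)*G j + (n:ℝ)^2*H j)/(n:ℝ)^3)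
      = (2*(∑ j ∈ range n, F j) - 3*(n:ℝ)*(∑ j ∈ range n, G j) + (n:ℝ)^2*(∑ j ∈ range n, H j))/(n:ℝ)^3
    from fun F G H => by
      rw [← sum_div, sum_add_distrib, sum_sub_distrib, ← mul_sum, ← mul_sum, ← mul_sum]]
  rw [L1, L2, L3]
  field_simp
  ring


lemma rotate_one (n : ℕ) (F : ℕ → ℝ) :
    ∑ j ∈ range n, F ((j+1) % n) = ∑ j ∈ range n, F (j % n) := by
  cases n with
  | zero => simp
  | succ k =>
    rw [sum_range_succ, Nat.mod_self]
    have h : ∀ j ∈ range k, F ((j+1) % (k+1)) = F (j+1) := by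
      intro j hj
      have := mem_range.1 hj
      rw [Nat.mod_eq_of_lt (by omega)]
    rw [sum_congr rfl h, ← sum_range_succ']
    refine sum_congr rfl fun j hj => ?_
    rw [Nat.mod_eq_of_lt (mem_range.1 hj)]

lemma rotate (a n : ℕ) (F : ℕ → ℝ) :
    ∑ j ∈ range n, F ((a + j) % n) = ∑ j ∈ range n, F (j % n) := by
  induction a with
  | zero => simp
  | succ b ih =>
    calc ∑ j ∈ range n, F ((b + 1 + j) % n)
        = ∑ j ∈ range n, (fun r => F ((b + r) % n)) ((j+1) % n) := by
          refine sum_congr rfl fun j _ => ?_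
          simp only []
          rw [show b+1+j = b+(j+1) from by omega,
            Nat.add_mod b ((j+1) % n) n, Nat.mod_mod_of_dvd _ dvd_rfl,
            ← Nat.add_mod b (j+1) n]
      _ = ∑ j ∈ range n, (fun r => F ((b + r) % n)) (j % n) := rotate_one n (fun r => F ((b + r) % n))
      _ = ∑ j ∈ range n, F ((b + j) % n) := by
          refine sum_congr rfl fun j hj => ?_
          simp only []
          rw [Nat.mod_eq_of_lt (mem_range.1 hj)]
      _ = ∑ j ∈ range n, F (j % n) := ih

lemma fract_shift (n : ℕ) (hn : 0 < n) (x : ℝ) (j : ℕ) :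
    Int.fract (x + j / n) =
      ((((⌊(n:ℝ)*x⌋ + j) % n : ℤ) : ℝ) + Int.fract ((n:ℝ)*x)) / n := by
  set m := ⌊(n:ℝ)*x⌋ with hm
  set s := Int.fract ((n:ℝ)*x) with hs
  have hn0 : (n:ℝ) ≠ 0 := Nat.cast_ne_zero.2 hn.ne'
  have hnz : (n:ℤ) ≠ 0 := by exact_mod_cast hn.ne'
  set r := (m + j) % (n:ℤ) with hr
  set q := (m + j) / (n:ℤ) with hq
  have hdm : (n:ℤ) * q + r = m + j := Int.mul_ediv_add_emod (m + j) n
  have hr0 : 0 ≤ r := Int.emod_nonneg _ hnz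
  have hrn : r < n := Int.emod_lt_of_pos _ (by exact_mod_cast hn)
  have hsx : (m:ℝ) + s = (n:ℝ)*x := Int.floor_add_fract _
  have hc : (n:ℝ)*(q:ℝ) + (r:ℝ) = (m:ℝ) + (j:ℝ) := by exact_mod_cast hdm
  have hxv : x = ((m:ℝ) + s)/n := by field_simp; linarith
  have hx : x + j / n = (q:ℝ) + ((r:ℝ) + s)/n := by
    rw [hxv]; field_simp; linarith
  rw [hx, Int.fract_intCast_add, Int.fract_eq_self.2 ⟨?_, ?_⟩]
  · exact div_nonneg (add_nonneg (by exact_mod_cast hr0) (Int.fract_nonneg _))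
      (by positivity)
  · have hs1 : s < 1 := Int.fract_lt_one _
    rw [div_lt_one (by positivity)]
    have h2 : (r:ℝ) + 1 ≤ (n:ℝ) := by exact_mod_cast hrn
    linarith

lemma raabe (n : ℕ) (hn : 0 < n) (x : ℝ) :
    ∑ j ∈ range n, κ (x + j / n) = κ ((n:ℝ) * x) / (n:ℝ)^2 := by
  have hnz : (n:ℤ) ≠ 0 := by exact_mod_cast hn.ne'
  set m := ⌊(n:ℝ)*x⌋ with hm
  set s := Int.fract ((n:ℝ)*x) with hs
  set a := (m % (n:ℤ)).toNat with hadef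
  have ha : (a:ℤ) = m % n := Int.toNat_of_nonneg (Int.emod_nonneg _ hnz)
  set G : ℕ → ℝ := fun r => (((r:ℝ)+s)/n * (1 - ((r:ℝ)+s)/n) * (1 - 2*(((r:ℝ)+s)/n))) with hG
  have step : ∀ j ∈ range n, κ (x + j/n) = G ((a + j) % n) := by
    intro j _
    have hz : (m + (j:ℤ)) % n = (((a + j) % n : ℕ) : ℤ) := by
      push_cast
      rw [ha]
      conv_lhs => rw [Int.add_emod]
      conv_rhs => rw [Int.add_emod, Int.emod_emod_of_dvd m dvd_rfl]
    simp only [κ, G, fract_shift n hn x j, ← hm, ← hs]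
    rw [show ((((m + (j:ℤ)) % n : ℤ)):ℝ) = (((a + j) % n : ℕ):ℝ) from by rw [hz]; norm_cast]
  rw [sum_congr rfl step, rotate a n G]
  have h2 : ∀ j ∈ range n, G (j % n) = G j := fun j hj => by
    rw [Nat.mod_eq_of_lt (mem_range.1 hj)]
  rw [sum_congr rfl h2, hG]
  rw [key_sum n hn s]
  simp only [κ, ← hs]


theorem kappa_divisor_identity (n : ℕ) (hn : 1 ≤ n) (Δ : ℝ) :
    ∑ J ∈ Finset.Icc 1 (n - 1), (J : ℝ) * (κ (Δ + J / n) + κ (Δ - J / n)) =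
      κ (n * Δ) / n - n * κ Δ := by
  have hn0 : 0 < n := hn
  have hnR : (n:ℝ) ≠ 0 := Nat.cast_ne_zero.2 hn0.ne'
  have hper : ∀ J ∈ Finset.Icc 1 (n-1), κ (Δ - J / n) = κ (Δ + ((n - J : ℕ):ℝ) / n) := by
    intro J hJ
    obtain ⟨h1, h2⟩ := Finset.mem_Icc.1 hJ
    have hJn : J ≤ n := by omega
    have harg : Δ + ((n - J : ℕ):ℝ) / n = (Δ - (J:ℝ)/n) + (1:ℤ) := by
      have : ((n - J : ℕ):ℝ) = (n:ℝ) - J := by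
        push_cast [Nat.cast_sub hJn]; ring
      rw [this]; push_cast; field_simp; ring
    rw [harg]
    simp only [κ, Int.fract_add_intCast]
  -- rewrite LHS
  calc ∑ J ∈ Finset.Icc 1 (n - 1), (J : ℝ) * (κ (Δ + J / n) + κ (Δ - J / n))
      = ∑ J ∈ Finset.Icc 1 (n - 1),
          ((J : ℝ) * κ (Δ + J / n) + (J:ℝ) * κ (Δ + ((n - J : ℕ):ℝ) / n)) := by
        refine Finset.sum_congr rfl fun J hJ => ?_
        rw [hper J hJ]; ring
    _ = (∑ J ∈ Finset.Icc 1 (n - 1), (J : ℝ) * κ (Δ + J / n))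
        + ∑ J ∈ Finset.Icc 1 (n - 1), (J:ℝ) * κ (Δ + ((n - J : ℕ):ℝ) / n) :=
        Finset.sum_add_distrib
    _ = (∑ J ∈ Finset.Icc 1 (n - 1), (J : ℝ) * κ (Δ + J / n))
        + ∑ K ∈ Finset.Icc 1 (n - 1), ((n - K : ℕ):ℝ) * κ (Δ + (K:ℝ) / n) := by
        congr 1
        refine Finset.sum_nbij' (i := fun J => n - J) (j := fun K => n - K)
          (fun J hJ => ?_) (fun K hK => ?_) (fun J hJ => ?_) (fun K hK => ?_)
          (fun J hJ => ?_)
        · simp only [Finset.mem_Icc] at *; omega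
        · simp only [Finset.mem_Icc] at *; omega
        · simp only [Finset.mem_Icc] at hJ; show n - (n - J) = J; omega
        · simp only [Finset.mem_Icc] at hK; show n - (n - K) = K; omega
        · simp only [Finset.mem_Icc] at hJ
          have : n - (n - J) = J := by omega
          rw [this]
    _ = ∑ J ∈ Finset.Icc 1 (n - 1), (n:ℝ) * κ (Δ + J / n) := by
        rw [← Finset.sum_add_distrib]
        refine Finset.sum_congr rfl fun J hJ => ?_
        obtain ⟨h1, h2⟩ := Finset.mem_Icc.1 hJ
        have hJn : J ≤ n := by omega
        rw [Nat.cast_sub hJn]; ring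
    _ = κ ((n:ℝ) * Δ) / n - n * κ Δ := by
        have hins : range n = insert 0 (Finset.Icc 1 (n-1)) := by
          ext j; simp only [Finset.mem_range, Finset.mem_insert, Finset.mem_Icc]; omega
        have h0 : (0:ℕ) ∉ Finset.Icc 1 (n-1) := by simp
        have hr := raabe n hn0 Δ
        rw [hins, Finset.sum_insert h0] at hr
        simp only [Nat.cast_zero, zero_div, add_zero] at hr
        rw [← Finset.mul_sum]
        have : ∑ J ∈ Finset.Icc 1 (n-1), κ (Δ + (J:ℝ)/n) = κ ((n:ℝ)*Δ)/(n:ℝ)^2 - κ Δ := by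
          linarith
        rw [this]
        field_simp
end

section
/- Let C, d be positive integers, set N = C·d, and let Δ be a real number. Let x₁, …, x_N be real numbers among which each of the C values 0, 1/C, 2/C, …, (C−1)/C occurs exactly d times (for instance x_k = ⌊(k−1)/d⌋/C for k = 1, …, N). Then (N−1)·κ(Δ) + ∑_{1 ≤ i < j ≤ N} [κ(Δ + x_i − x_j) + κ(Δ − x_i + x_j)] = (N²/C³)·κ(CΔ) − κ(Δ). -/
open Finset Function

theorem Finset.sum_comp_eq_nsmul_sum_of_card_fiber {ι α β M : Type*} [Fintype ι] [Fintype β]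
    [DecidableEq α] [AddCommMonoid M] {x : ι → α} {e : β → α} {d : ℕ} (he : Injective e)
    (hfib : ∀ b, #{k | x k = e b} = d) (hcard : Fintype.card ι = Fintype.card β * d)
    (g : α → M) :
    ∑ k, g (x k) = d • ∑ b, g (e b) := by
  set t := univ.map ⟨e, he⟩
  have hmem : ∀ k, x k ∈ t := by
    have : #{k | x k ∈ t} = Fintype.card ι := by
      rw [← sum_card_fiberwise_eq_card_filter, sum_map, hcard]
      simp [hfib]
    simpa [filter_eq_self] using (card_eq_iff_eq_univ _).1 this
  rw [← sum_fiberwise_of_maps_to' (fun k _ => hmem k), sum_map, smul_sum]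
  simp [hfib]

theorem Finset.sum_filter_lt_add_swap {ι M : Type*} [Fintype ι] [LinearOrder ι] [AddCommGroup M]
    (F : ι → ι → M) :
    ∑ p ∈ univ.filter (fun p : ι × ι => p.1 < p.2), (F p.1 p.2 + F p.2 p.1) =
      ∑ i, ∑ j, F i j - ∑ i, F i i := by
  have hsplit (i j : ι) : F i j = (if i < j then F i j else 0) + (if j < i then F i j else 0) +
      (if i = j then F i j else 0) := by
    rcases lt_trichotomy i j with h | rfl | h
    · simp [h, h.ne, h.not_gt]
    · simp
    · simp [h, h.ne', h.not_gt]
  rw [eq_sub_iff_add_eq, sum_add_distrib, sum_filter, sum_filter, Fintype.sum_prod_type,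
    Fintype.sum_prod_type]
  conv_rhs => enter [2, i, 2, j]; rw [hsplit i j]
  simp only [sum_add_distrib, sum_ite_eq]
  rw [sum_comm (f := fun i j => if j < i then F i j else 0)]
  simp

theorem kappa_periodic : Periodic κ 1 := fun x => by simp [κ]

theorem kappa_neg (x : ℝ) : κ (-x) = -κ x := by
  by_cases hx : Int.fract x = 0
  · simp [κ, hx, Int.fract_neg_eq_zero.2 hx]
  · rw [κ, κ, Int.fract_neg hx]
    ring

theorem kappa_of_mem_Ico {x : ℝ} (hx : x ∈ Set.Ico 0 1) : κ x = x * (1 - x) * (1 - 2 * x) := by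
  rw [κ, Int.fract_eq_self.2 hx]

theorem sum_range_cubic (n : ℕ) (u : ℝ) :
    ∑ a ∈ range n, (u + a) * (n - (u + a)) * (n - 2 * (u + a)) =
      n * (u * (1 - u) * (1 - 2 * u)) := by
  let F : ℝ → ℝ := fun t => t * (t - 1) * (t - n) * (t - n - 1) / 2
  have hF (t : ℝ) : F (t + 1) - F t = t * (n - t) * (n - 2 * t) := by ring
  calc ∑ a ∈ range n, (u + a) * (n - (u + a)) * (n - 2 * (u + a))
      = ∑ a ∈ range n, (F (u + (a + 1 : ℕ)) - F (u + a)) := by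
        refine sum_congr rfl fun a _ => ?_
        rw [← hF]; push_cast; ring_nf
    _ = n * (u * (1 - u) * (1 - 2 * u)) := by
        rw [sum_range_sub (fun a => F (u + a))]
        simp only [F, Nat.cast_zero, add_zero]
        ring

theorem sum_range_kappa_add_div (n : ℕ) (x : ℝ) :
    ∑ a ∈ range n, κ (x + a / n) = κ (n * x) / n ^ 2 := by
  rcases eq_or_ne n 0 with rfl | hn
  · simp
  have hn' : (n : ℝ) ≠ 0 := Nat.cast_ne_zero.2 hn
  have hlhs : Periodic (fun x => ∑ a ∈ range n, κ (x + a / n)) (1 / n) := fun x => by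
    let f : ℕ → ℝ := fun a => κ (x + a / n)
    have hwrap : f n = f 0 := by simp [f, hn', kappa_periodic x]
    have hsucc : ∑ a ∈ range n, f (a + 1) = ∑ a ∈ range n, f a := by
      have := (sum_range_succ' f n).symm.trans (sum_range_succ f n)
      rwa [hwrap, add_left_inj] at this
    convert hsucc using 2 with a
    simp only [f]; push_cast; ring_nf
  have hrhs : Periodic (fun x => κ (n * x) / n ^ 2) (1 / n) := fun x => by
    simp only [mul_add, mul_one_div_cancel hn', kappa_periodic (n * x)]
  set u := Int.fract (n * x) with hu_def
  have hu : u ∈ Set.Ico 0 1 := ⟨Int.fract_nonneg _, Int.fract_lt_one _⟩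
  have hx : x - ⌊n * x⌋ * (1 / n) = u / n := by
    rw [hu_def, Int.fract]; field_simp
  rw [← hlhs.sub_int_mul_eq ⌊n * x⌋, ← hrhs.sub_int_mul_eq ⌊n * x⌋]
  simp only [hx, mul_div_cancel₀ _ hn', kappa_of_mem_Ico hu]
  have hterm : ∀ a ∈ range n,
      κ (u / n + a / n) = (u + a) * (n - (u + a)) * (n - 2 * (u + a)) / n ^ 3 := by
    intro a ha
    have ha : (a : ℝ) + 1 ≤ n := by exact_mod_cast mem_range.1 ha
    have hmem : (u + a) / n ∈ Set.Ico 0 1 :=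
      ⟨div_nonneg (add_nonneg hu.1 a.cast_nonneg) n.cast_nonneg,
        (div_lt_one (by positivity)).2 (by linarith [hu.2])⟩
    rw [← add_div, kappa_of_mem_Ico hmem]
    field_simp
  rw [sum_congr rfl hterm, ← sum_div, sum_range_cubic]
  field_simp

theorem sum_range_kappa_sub_div (n : ℕ) (x : ℝ) :
    ∑ a ∈ range n, κ (x - a / n) = κ (n * x) / n ^ 2 := by
  calc ∑ a ∈ range n, κ (x - a / n) = -∑ a ∈ range n, κ (-x + a / n) := by
        rw [← sum_neg_distrib]
        exact sum_congr rfl fun a _ => by rw [← kappa_neg, neg_add, neg_neg, sub_eq_add_neg]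
    _ = κ (n * x) / n ^ 2 := by
        rw [sum_range_kappa_add_div, mul_neg, kappa_neg, neg_div, neg_neg]

theorem kappa_pack_identity_general (C d N : ℕ) (hC : 0 < C) (hN : N = C * d)
    (Δ : ℝ) (x : Fin N → ℝ)
    (hx : ∀ v : Fin C, (Finset.univ.filter (fun k : Fin N => x k = (v : ℝ) / C)).card = d) :
    ((N : ℝ) - 1) * κ Δ +
        ∑ p ∈ Finset.univ.filter (fun p : Fin N × Fin N => p.1 < p.2),
          (κ (Δ + x p.1 - x p.2) + κ (Δ - x p.1 + x p.2)) =
      ((N : ℝ) ^ 2 / (C : ℝ) ^ 3) * κ (C * Δ) - κ Δ := by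
  have hC' : (C : ℝ) ≠ 0 := Nat.cast_ne_zero.2 hC.ne'
  have hvals : Injective (fun v : Fin C => (v : ℝ) / C) := fun v w h =>
    Fin.ext (by simpa [hC'] using h)
  have hsum (g : ℝ → ℝ) : ∑ k, g (x k) = d * ∑ a ∈ range C, g (a / C) := by
    rw [sum_comp_eq_nsmul_sum_of_card_fiber hvals hx (by simp [hN]) g, nsmul_eq_mul,
      Fin.sum_univ_eq_sum_range (fun a => g (a / C))]
  have hrow (y : ℝ) : ∑ j, κ (y - x j) = d * (κ (C * y) / C ^ 2) := by
    rw [hsum (fun z => κ (y - z)), sum_range_kappa_sub_div]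
  have htotal : ∑ i, ∑ j, κ (Δ + x i - x j) = d ^ 2 * κ (C * Δ) / C := by
    have hcol (a : ℕ) : κ (C * (Δ + a / C)) = κ (C * Δ) := by
      rw [mul_add, mul_div_cancel₀ _ hC', ← mul_one (a : ℝ), kappa_periodic.nat_mul]
    simp only [hrow]
    rw [hsum (fun y => d * (κ (C * (Δ + y)) / C ^ 2))]
    simp only [hcol, sum_const, card_range, nsmul_eq_mul]
    field_simp
  rw [sum_congr rfl fun p _ => by rw [sub_add_eq_add_sub], sum_filter_lt_add_swap
    (fun i j => κ (Δ + x i - x j)), htotal]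
  simp only [add_sub_cancel_right, sum_const, card_univ, Fintype.card_fin, nsmul_eq_mul]
  subst hN
  push_cast
  field_simp
  ring

theorem kappa_pack_identity (C d N : ℕ) (hC : 0 < C) (hd : 0 < d) (hN : N = C * d)
    (Δ : ℝ) (x : Fin N → ℝ)
    (hx : ∀ v : Fin C, (Finset.univ.filter (fun k : Fin N => x k = (v : ℝ) / C)).card = d) :
    ((N : ℝ) - 1) * κ Δ +
        ∑ p ∈ Finset.univ.filter (fun p : Fin N × Fin N => p.1 < p.2),
          (κ (Δ + x p.1 - x p.2) + κ (Δ - x p.1 + x p.2)) =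
      ((N : ℝ) ^ 2 / (C : ℝ) ^ 3) * κ (C * Δ) - κ Δ :=
  kappa_pack_identity_general C d N hC hN Δ x hx
end

section
/- Let m, n be positive integers, set N = m·n, and let r be an integer with 0 ≤ r < n. Set g = gcd(n, r), with the convention gcd(n, 0) = n. Then for every integer v with 0 ≤ v < N, the number of pairs (j, k) with 0 ≤ j < m, 0 ≤ k < n and n·j + r·k ≡ v (mod N) equals g if g divides v, and equals 0 otherwise. In particular, the N residues n·j + r·k mod N occupy exactly the N/g multiples of g in {0, 1, …, N−1}, each attained with multiplicity g. -/
theorem standard_solution_residue_count (m n : ℕ) (hm : 0 < m) (hn : 0 < n)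
    (N : ℕ) (hN : N = m * n) (r : ℕ) (hr : r < n) (g : ℕ) (hg : g = Nat.gcd n r)
    (v : ℕ) (hv : v < N) :
    ((Finset.range m ×ˢ Finset.range n).filter
        (fun p : ℕ × ℕ => (n * p.1 + r * p.2) % N = v)).card =
      if g ∣ v then g else 0 := by
  have hg0 : 0 < g := hg ▸ Nat.gcd_pos_of_pos_left r hn
  have hgn : g ∣ n := hg ▸ Nat.gcd_dvd_left n r
  have hgr : g ∣ r := hg ▸ Nat.gcd_dvd_right n r
  have hnN : n ∣ N := hN ▸ dvd_mul_left n m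
  have hN0 : 0 < N := hN ▸ Nat.mul_pos hm hn
  have hgcdNn : Nat.gcd N n = n := Nat.gcd_eq_right hnN
  -- Step A: project to the second coordinate
  have hA : ((Finset.range m ×ˢ Finset.range n).filter
        (fun p : ℕ × ℕ => (n * p.1 + r * p.2) % N = v)).card
      = ((Finset.range n).filter (fun k => r * k % n = v % n)).card := by
    apply Finset.card_bij (fun p _ => p.2)
    · intro p hp
      simp only [Finset.mem_filter, Finset.mem_product, Finset.mem_range] at hp ⊢
      refine ⟨hp.1.2, ?_⟩
      calc r * p.2 % n = (n * p.1 + r * p.2) % n := (Nat.mul_add_mod n p.1 (r * p.2)).symm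
        _ = (n * p.1 + r * p.2) % N % n := (Nat.mod_mod_of_dvd _ hnN).symm
        _ = v % n := by rw [hp.2]
    · intro p hp q hq hpq
      simp only [Finset.mem_filter, Finset.mem_product, Finset.mem_range] at hp hq
      have h1 : n * p.1 + r * p.2 ≡ n * q.1 + r * q.2 [MOD N] := by
        unfold Nat.ModEq; rw [hp.2, hq.2]
      rw [hpq] at h1
      have h2 : n * p.1 ≡ n * q.1 [MOD N] := h1.add_right_cancel' _
      have h3 : p.1 ≡ q.1 [MOD m] := by
        have h4 := Nat.ModEq.cancel_left_div_gcd hN0 h2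
        rwa [hgcdNn, hN, Nat.mul_div_cancel _ hn] at h4
      have h5 : p.1 = q.1 := by
        have h6 := h3
        unfold Nat.ModEq at h6
        rwa [Nat.mod_eq_of_lt hp.1.1, Nat.mod_eq_of_lt hq.1.1] at h6
      exact Prod.ext h5 hpq
    · intro k hk
      simp only [Finset.mem_filter, Finset.mem_range] at hk
      set a := r * k % N with ha
      have haN : a < N := Nat.mod_lt _ hN0
      have havn : a % n = v % n := by
        rw [ha, Nat.mod_mod_of_dvd _ hnN, ← hk.2]
      have hle : a ≤ v + N := le_of_lt (lt_of_lt_of_le haN (Nat.le_add_left _ _))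
      have hdvd : n ∣ (v + N - a) := by
        have hme : a ≡ v + N [MOD n] := by
          unfold Nat.ModEq
          obtain ⟨w, hw⟩ := hnN
          have hNn : N % n = 0 := by rw [hw, Nat.mul_mod_right]
          rw [havn, Nat.add_mod, hNn, Nat.add_zero, Nat.mod_mod]
        exact (Nat.modEq_iff_dvd' hle).mp hme
      set d := (v + N - a) % N with hd
      have hdvd' : n ∣ d := (Nat.dvd_mod_iff hnN).mpr hdvd
      have hdN : d < N := Nat.mod_lt _ hN0
      refine ⟨(d / n, k), ?_, rfl⟩
      simp only [Finset.mem_filter, Finset.mem_product, Finset.mem_range]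
      have hjm : d / n < m := by
        rw [Nat.div_lt_iff_lt_mul hn]; omega
      have hnd : n * (d / n) = d := Nat.mul_div_cancel' hdvd'
      refine ⟨⟨hjm, hk.1⟩, ?_⟩
      calc (n * (d / n) + r * k) % N = (d + r * k) % N := by rw [hnd]
        _ = (d + r * k % N) % N := by rw [Nat.add_mod, Nat.mod_mod, ← Nat.add_mod]
        _ = ((v + N - a) % N + a) % N := by rw [← hd, ← ha]
        _ = (v + N - a + a) % N := by rw [Nat.mod_add_mod]
        _ = (v + N) % N := by rw [Nat.sub_add_cancel hle]
        _ = v % N := by rw [Nat.add_mod_right]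
        _ = v := Nat.mod_eq_of_lt hv
  rw [hA]
  by_cases hdv : g ∣ v
  · rw [if_pos hdv]
    -- count solutions of r*k ≡ v (mod n) in [0, n)
    obtain ⟨s, hs⟩ := hgn
    obtain ⟨r', hr'⟩ := hgr
    have hs0 : 0 < s := by
      rcases Nat.eq_zero_or_pos s with h | h
      · subst h; simp at hs; omega
      · exact h
    have hrs : n ∣ r * s := ⟨r', by rw [hr', hs]; ring⟩
    -- a particular solution k0 < s
    set A := Nat.gcdA n r with hA'
    set B := Nat.gcdB n r with hB'
    have hbez : (g : ℤ) = n * A + r * B := by rw [hg]; exact Nat.gcd_eq_gcd_ab n r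
    obtain ⟨c, hc⟩ := hdv
    set y : ℤ := B * c with hy
    have hry : (r : ℤ) * y ≡ (v : ℤ) [ZMOD (n : ℤ)] := by
      rw [Int.modEq_comm, Int.modEq_iff_dvd]
      refine ⟨-(A * c), ?_⟩
      have : (v : ℤ) = (g : ℤ) * c := by exact_mod_cast hc
      rw [this, hbez]; ring
    set k0z : ℤ := y % (s : ℤ) with hk0z
    have hs0' : (0 : ℤ) < (s : ℤ) := by exact_mod_cast hs0
    have hk0z0 : 0 ≤ k0z := Int.emod_nonneg y (by omega)
    have hk0zs : k0z < s := Int.emod_lt_of_pos y hs0'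
    have hrk0z : (r : ℤ) * k0z ≡ (v : ℤ) [ZMOD (n : ℤ)] := by
      refine Int.ModEq.trans ?_ hry
      rw [Int.modEq_iff_dvd]
      have h1 : y - k0z = (s : ℤ) * (y / s) := by
        rw [hk0z]; rw [Int.emod_def]; ring
      have h2 : (r : ℤ) * y - r * k0z = (r * s : ℤ) * (y / s) := by
        push_cast
        linear_combination (r : ℤ) * h1
      rw [h2]
      exact Dvd.dvd.mul_right (by exact_mod_cast hrs) _
    set k0 : ℕ := k0z.toNat with hk0
    have hk0z' : (k0 : ℤ) = k0z := Int.toNat_of_nonneg hk0z0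
    clear_value A B
    clear hbez hy hA' hB' hk0z hk0
    clear_value y k0z k0
    have hk0s : k0 < s := by omega
    have hk0sol : r * k0 % n = v % n := by
      have : (r * k0 : ℕ) ≡ v [MOD n] := by
        rw [← Int.natCast_modEq_iff]
        push_cast
        rw [hk0z']
        exact hrk0z
      exact this
    -- bijection with range g
    have hB : ((Finset.range g).card =
        ((Finset.range n).filter (fun k => r * k % n = v % n)).card) := by
      apply Finset.card_bij (fun t _ => k0 + t * s)
      · intro t ht
        simp only [Finset.mem_range] at ht
        simp only [Finset.mem_filter, Finset.mem_range]
        constructor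
        · calc k0 + t * s < s + t * s := by omega
            _ = (t + 1) * s := by ring
            _ ≤ g * s := Nat.mul_le_mul_right s (by omega)
            _ = n := hs.symm
        · have hcong : r * (k0 + t * s) ≡ r * k0 [MOD n] := by
            have h2 : r * (k0 + t * s) = r * k0 + r * s * t := by ring
            rw [h2]
            simpa using Nat.ModEq.add_left (r * k0)
              (Nat.ModEq.mul_right t ((Nat.modEq_zero_iff_dvd).mpr hrs))
          exact hcong.trans (by exact hk0sol)
      · intro t1 h1 t2 h2 he
        have : t1 * s = t2 * s := by omega
        exact Nat.eq_of_mul_eq_mul_right hs0 this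
      · intro k hk
        simp only [Finset.mem_filter, Finset.mem_range] at hk
        -- in ℤ: s ∣ k - k0
        have hkk0 : (r : ℤ) * k ≡ (r : ℤ) * k0 [ZMOD (n : ℤ)] := by
          have hk' : (r * k : ℕ) ≡ (v : ℕ) [MOD n] := hk.2
          have hk0' : (r * k0 : ℕ) ≡ (v : ℕ) [MOD n] := hk0sol
          have := (Int.natCast_modEq_iff.mpr hk').trans (Int.natCast_modEq_iff.mpr hk0').symm
          push_cast at this
          exact this
        have hdv1 : (n : ℤ) ∣ (r : ℤ) * k - (r : ℤ) * k0 := by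
          rw [Int.modEq_comm, Int.modEq_iff_dvd] at hkk0
          exact hkk0
        have hg0' : (g : ℤ) ≠ 0 := by exact_mod_cast hg0.ne'
        have hdv2 : (s : ℤ) ∣ (r' : ℤ) * ((k : ℤ) - k0) := by
          have heq : (r : ℤ) * k - (r : ℤ) * k0 = (g : ℤ) * ((r' : ℤ) * ((k : ℤ) - k0)) := by
            have : (r : ℤ) = (g : ℤ) * r' := by exact_mod_cast hr'
            rw [this]; ring
          have hn' : (n : ℤ) = (g : ℤ) * s := by exact_mod_cast hs
          rw [heq, hn'] at hdv1
          exact (mul_dvd_mul_iff_left hg0').mp hdv1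
        have hcop : IsCoprime (s : ℤ) (r' : ℤ) := by
          rw [Int.isCoprime_iff_gcd_eq_one]
          have h := Nat.coprime_div_gcd_div_gcd (m := n) (n := r) (hg ▸ hg0)
          have hsn : n / Nat.gcd n r = s := by
            rw [← hg, hs, Nat.mul_div_cancel_left _ hg0]
          have hrn : r / Nat.gcd n r = r' := by
            rw [← hg, hr', Nat.mul_div_cancel_left _ hg0]
          rw [hsn, hrn] at h
          simpa [Int.gcd_natCast_natCast] using h
        have hdv3 : (s : ℤ) ∣ (k : ℤ) - k0 := hcop.dvd_of_dvd_mul_left hdv2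
        obtain ⟨u, hu⟩ := hdv3
        have hkc : (k : ℤ) = k0z + s * u := by
          rw [← hk0z']; linarith [hu]
        have hk0le : (0 : ℤ) ≤ (k : ℤ) := Int.natCast_nonneg k
        have hkn : (k : ℤ) < (n : ℤ) := by exact_mod_cast hk.1
        have hnz : (n : ℤ) = (g : ℤ) * s := by exact_mod_cast hs
        have hu0 : 0 ≤ u := by
          by_contra h
          push_neg at h
          have h1 : u ≤ -1 := by omega
          have h2 : (s : ℤ) * u ≤ (s : ℤ) * (-1) :=
            mul_le_mul_of_nonneg_left h1 (le_of_lt hs0')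
          linarith
        have hug : u < (g : ℤ) := by
          by_contra h
          push_neg at h
          have h2 : (s : ℤ) * (g : ℤ) ≤ (s : ℤ) * u :=
            mul_le_mul_of_nonneg_left h (le_of_lt hs0')
          nlinarith
        refine ⟨u.toNat, Finset.mem_range.mpr (by omega), ?_⟩
        have hfin : (k0 + u.toNat * s : ℤ) = (k : ℤ) := by
          push_cast [Int.toNat_of_nonneg hu0]
          rw [hk0z']
          linarith
        exact_mod_cast hfin
    rw [← hB, Finset.card_range]
  · rw [if_neg hdv, Finset.card_eq_zero, Finset.filter_eq_empty_iff]
    intro k hk hcon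
    apply hdv
    have h1 : g ∣ r * k % n := (Nat.dvd_mod_iff hgn).mpr (Dvd.dvd.mul_right hgr k)
    rw [hcon] at h1
    exact (Nat.dvd_mod_iff hgn).mp h1
end

section
/- Let Δ̃₁, Δ̃₂, Δ̃₃ be real numbers with Δ̃₁ + Δ̃₂ + Δ̃₃ = 1, set y_a = e^{2πiΔ̃_a}, and assume ∑_{a=1}^{3} sin(2πΔ̃_a) ≠ 0. Then for a complex number z, the equation (∏_{a=1}^{3}(1 − z·y_a^{−1}))² = (∏_{a=1}^{3}(1 − z·y_a))² holds if and only if z = 0, z = 1, z = −1, or z² + (1 − ∑_{a=1}^{3} cos(2πΔ̃_a))·z + 1 = 0. (This identifies the complete solution set of the SU(2) elliptic Bethe Ansatz equations in the low-temperature limit: the trivial and standard solutions u₂₁ ∈ {0, 1/2, τ/2, (1+τ)/2} together with the two non-standard solutions e^{±2πiu_Δ} = −A ± √(A² − 1) with A = (1 − ∑_a cos 2πΔ̃_a)/2.) -/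
open Complex

theorem SU2_lowT_BAE_solution_set (Δ : Fin 3 → ℝ) (hΔ : Δ 0 + Δ 1 + Δ 2 = 1)
    (y : Fin 3 → ℂ) (hy : ∀ a, y a = Complex.exp (2 * Real.pi * Complex.I * (Δ a : ℂ)))
    (hsin : ∑ a, Real.sin (2 * Real.pi * Δ a) ≠ 0) (z : ℂ) :
    (∏ a, (1 - z * (y a)⁻¹)) ^ 2 = (∏ a, (1 - z * y a)) ^ 2 ↔
      z = 0 ∨ z = 1 ∨ z = -1 ∨
        z ^ 2 + (1 - ((∑ a, Real.cos (2 * Real.pi * Δ a) : ℝ) : ℂ)) * z + 1 = 0 := by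
  have hcast : ((Δ 0 : ℂ) + (Δ 1 : ℂ) + (Δ 2 : ℂ)) = 1 := by exact_mod_cast hΔ
  have hprod : y 0 * y 1 * y 2 = 1 := by
    rw [hy 0, hy 1, hy 2, ← Complex.exp_add, ← Complex.exp_add]
    rw [show 2 * (Real.pi : ℂ) * Complex.I * (Δ 0 : ℂ) + 2 * (Real.pi : ℂ) * Complex.I * (Δ 1 : ℂ)
        + 2 * (Real.pi : ℂ) * Complex.I * (Δ 2 : ℂ)
        = 2 * (Real.pi : ℂ) * Complex.I * ((Δ 0 : ℂ) + (Δ 1 : ℂ) + (Δ 2 : ℂ)) by ring, hcast,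
      mul_one]
    exact Complex.exp_two_pi_mul_I
  have hcs : ∀ a, y a = (Real.cos (2 * Real.pi * Δ a) : ℂ) + (Real.sin (2 * Real.pi * Δ a) : ℂ) * Complex.I ∧
      (y a)⁻¹ = (Real.cos (2 * Real.pi * Δ a) : ℂ) - (Real.sin (2 * Real.pi * Δ a) : ℂ) * Complex.I := by
    intro a
    have h1 : (2 * (Real.pi : ℂ) * Complex.I * (Δ a : ℂ)) = ((2 * Real.pi * Δ a : ℝ) : ℂ) * Complex.I := by
      push_cast; ring
    constructor
    · rw [hy a, h1, Complex.exp_mul_I, ← Complex.ofReal_cos, ← Complex.ofReal_sin]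
    · rw [hy a, ← Complex.exp_neg, h1, show (-(((2 * Real.pi * Δ a : ℝ) : ℂ) * Complex.I))
        = ((-(2 * Real.pi * Δ a) : ℝ) : ℂ) * Complex.I by push_cast; ring,
        Complex.exp_mul_I, ← Complex.ofReal_cos, ← Complex.ofReal_sin, Real.cos_neg, Real.sin_neg]
      push_cast; ring
  have hinv0 : (y 0)⁻¹ = y 1 * y 2 := inv_eq_of_mul_eq_one_right (by linear_combination hprod)
  have hinv1 : (y 1)⁻¹ = y 0 * y 2 := inv_eq_of_mul_eq_one_right (by linear_combination hprod)
  have hinv2 : (y 2)⁻¹ = y 0 * y 1 := inv_eq_of_mul_eq_one_right (by linear_combination hprod)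
  set S : ℝ := ∑ a, Real.sin (2 * Real.pi * Δ a) with hS
  set C : ℝ := ∑ a, Real.cos (2 * Real.pi * Δ a) with hC
  have hSsum : S = Real.sin (2 * Real.pi * Δ 0) + Real.sin (2 * Real.pi * Δ 1)
      + Real.sin (2 * Real.pi * Δ 2) := by rw [hS, Fin.sum_univ_three]
  have hCsum : C = Real.cos (2 * Real.pi * Δ 0) + Real.cos (2 * Real.pi * Δ 1)
      + Real.cos (2 * Real.pi * Δ 2) := by rw [hC, Fin.sum_univ_three]
  have hEmF : (y 0 + y 1 + y 2) - (y 1 * y 2 + y 0 * y 2 + y 0 * y 1)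
      = 2 * Complex.I * (S : ℂ) := by
    rw [← hinv0, ← hinv1, ← hinv2, (hcs 0).2, (hcs 1).2, (hcs 2).2,
      (hcs 0).1, (hcs 1).1, (hcs 2).1, hSsum]
    push_cast; ring
  have hEpF : (y 0 + y 1 + y 2) + (y 1 * y 2 + y 0 * y 2 + y 0 * y 1) = 2 * (C : ℂ) := by
    rw [← hinv0, ← hinv1, ← hinv2, (hcs 0).2, (hcs 1).2, (hcs 2).2,
      (hcs 0).1, (hcs 1).1, (hcs 2).1, hCsum]
    push_cast; ring
  have hSne : (S : ℂ) ≠ 0 := Complex.ofReal_ne_zero.mpr hsin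
  rw [Fin.prod_univ_three, Fin.prod_univ_three, hinv0, hinv1, hinv2]
  have hkey : ((1 - z * (y 1 * y 2)) * (1 - z * (y 0 * y 2)) * (1 - z * (y 0 * y 1))) ^ 2
      - ((1 - z * y 0) * (1 - z * y 1) * (1 - z * y 2)) ^ 2
      = 2 * Complex.I * (S : ℂ) * (z * ((1 + z) * ((1 - z)
        * (2 * (z ^ 2 + (1 - (C : ℂ)) * z + 1))))) := by
    linear_combination
      (((-1 + (y 0 + y 1 + y 2) * z ^ 2 - (1 + y 0 * y 1 * y 2) * z ^ 3) + 1 + z ^ 3)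
          * (2 - (y 0 + y 1 + y 2 + (y 1 * y 2 + y 0 * y 2 + y 0 * y 1)) * z
            + (y 0 + y 1 + y 2 + (y 1 * y 2 + y 0 * y 2 + y 0 * y 1)) * z ^ 2 - 2 * z ^ 3)
        + ((-1 + (y 0 + y 1 + y 2) * z ^ 2 - (1 + y 0 * y 1 * y 2) * z ^ 3) + 1 - z ^ 3)
          * ((y 0 + y 1 + y 2 - (y 1 * y 2 + y 0 * y 2 + y 0 * y 1)) * z * (1 + z))
        + (y 0 * y 1 * y 2 - 1)
          * ((-1 + (y 0 + y 1 + y 2) * z ^ 2 - (1 + y 0 * y 1 * y 2) * z ^ 3) + 1 + z ^ 3)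
          * ((-1 + (y 0 + y 1 + y 2) * z ^ 2 - (1 + y 0 * y 1 * y 2) * z ^ 3) + 1 - z ^ 3)) * hprod
      + (z * (1 + z) * (2 - (y 0 + y 1 + y 2 + (y 1 * y 2 + y 0 * y 2 + y 0 * y 1)) * z
          + (y 0 + y 1 + y 2 + (y 1 * y 2 + y 0 * y 2 + y 0 * y 1)) * z ^ 2 - 2 * z ^ 3)) * hEmF
      + (-(2 * Complex.I * (S : ℂ)) * z ^ 2 * (1 + z) * (1 - z)) * hEpF
  constructor
  · intro h
    have h0 : 2 * Complex.I * (S : ℂ) * (z * ((1 + z) * ((1 - z)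
        * (2 * (z ^ 2 + (1 - (C : ℂ)) * z + 1))))) = 0 := by rw [← hkey, h, sub_self]
    have h2 : z * ((1 + z) * ((1 - z) * (2 * (z ^ 2 + (1 - (C : ℂ)) * z + 1)))) = 0 := by
      rcases mul_eq_zero.mp h0 with h' | h'
      · exact absurd h' (by simp [Complex.I_ne_zero, hSne])
      · exact h'
    rcases mul_eq_zero.mp h2 with h' | h2
    · exact Or.inl h'
    rcases mul_eq_zero.mp h2 with h' | h2
    · exact Or.inr (Or.inr (Or.inl (by linear_combination h')))
    rcases mul_eq_zero.mp h2 with h' | h2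
    · exact Or.inr (Or.inl (by linear_combination -h'))
    rcases mul_eq_zero.mp h2 with h' | h2
    · exact absurd h' two_ne_zero
    · exact Or.inr (Or.inr (Or.inr h2))
  · intro h
    have h0 : z * ((1 + z) * ((1 - z) * (2 * (z ^ 2 + (1 - (C : ℂ)) * z + 1)))) = 0 := by
      rcases h with h | h | h | h
      · rw [h]; ring
      · rw [h]; ring
      · rw [h]; ring
      · rw [h]; ring
    have := hkey
    rw [h0, mul_zero] at this
    exact sub_eq_zero.mp this
end
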